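/- Fix 0 < ρ < 1 and a Möbius transformation f with f(𝔻₁) ⊆ 𝔻_ρ. Define operators on bounded holomorphic functions h on 𝔻_ρ: (L h)(w) = (1/(2πi)) ∮_{|z|=ρ} h(f(w/z))/(1−z) dz and (R_m h)(w) = (1/(2πi)) ∮_{|z|=ρ} z^{m-1} h(f(w/z))/(1−z) dz for m ≥ 1. Then, with ‖h‖_osc = sup_{u,v∈𝔻_ρ}|h(u)−h(v)| and K(ρ) = (1/(2π)) ∮_{|z|=ρ}|dz|/|1−z|: (a) ‖L h‖_osc ≤ ‖h‖_osc; (b) ‖R_m h‖_osc ≤ ρ^{m-1} K(ρ) ‖h‖_osc; (c) L h(0) = R_m h(0) = 0. -/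

import Mathlib

open Complex Metric

/-- The operator `L`: `(L h)(w) = (1/(2πi)) ∮_{|z|=ρ} h(f(w/z))/(1−z) dz`. -/
noncomputable def Lop (f : ℂ → ℂ) (ρ : ℝ) (h : ℂ → ℂ) (w : ℂ) : ℂ :=
  (2 * Real.pi * I)⁻¹ * ∮ z in C(0, ρ), (1 - z)⁻¹ * h (f (w / z))

/-- The operator `R_m`: `(R_m h)(w) = (1/(2πi)) ∮_{|z|=ρ} z^{m-1} h(f(w/z))/(1−z) dz`. -/
noncomputable def Rop (f : ℂ → ℂ) (ρ : ℝ) (m : ℕ) (h : ℂ → ℂ) (w : ℂ) : ℂ :=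
  (2 * Real.pi * I)⁻¹ * ∮ z in C(0, ρ), z ^ (m - 1) * (1 - z)⁻¹ * h (f (w / z))

/-!
Under the inversion `z ↦ 1/z` the kernel `(1 - z)⁻¹ dz` of `L` becomes `dζ / (ζ (ζ - 1))`
on the circle of radius `1/ρ`, which encloses both poles `0` and `1`, while `ζ ↦ h (f (w ζ))` is
holomorphic on the closed disc of radius `1/ρ` when `|w| < ρ`. Splitting into partial fractions,
Cauchy's formula at `1` and at `0` gives the coboundary identity `L h (w) = h (f w) - h (f 0)`,
whence (a). For (b) the oscillation of `h` is estimated under the integral sign. For (c), at `w = 0`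
the integrand of `R_m` is holomorphic on the closed disc of radius `ρ < 1`.
-/

open Real Set

theorem circleIntegral_eq_circleIntegral_inv_radius {E : Type*} [NormedAddCommGroup E]
    [NormedSpace ℂ E] (f : ℂ → E) (R : ℝ) :
    (∮ z in C(0, R), f z) = ∮ z in C(0, R⁻¹), (z ^ 2)⁻¹ • f z⁻¹ := by
  set φ : ℝ → E := fun θ => deriv (circleMap 0 R) θ • f (circleMap 0 R θ)
  have hφ : Function.Periodic φ (2 * π) := fun θ => by
    simp only [φ, deriv_circleMap, periodic_circleMap 0 R θ]
  calc (∮ z in C(0, R), f z) = ∫ θ in -(2 * π)..0, φ θ := by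
        have := hφ.intervalIntegral_add_eq 0 (-(2 * π))
        rwa [zero_add, neg_add_cancel] at this
    _ = ∫ θ in 0..2 * π, φ (-θ) := by simp [intervalIntegral.integral_comp_neg]
    _ = ∮ z in C(0, R⁻¹), (z ^ 2)⁻¹ • f z⁻¹ := by
        refine intervalIntegral.integral_congr fun θ _ => ?_
        have hinv := circleMap_zero_inv R⁻¹ θ
        rw [inv_inv] at hinv
        simp only [φ, deriv_circleMap, smul_smul, hinv]
        congr 1
        rw [← hinv]
        rcases eq_or_ne (circleMap 0 R⁻¹ θ) 0 with h0 | h0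
        · simp [h0]
        · field_simp

theorem circleIntegral_one_sub_inv_mul_comp_div {g : ℂ → ℂ}
    (hg : DifferentiableOn ℂ g (ball 0 1)) {ρ : ℝ} (hρ0 : 0 < ρ) (hρ1 : ρ < 1) {w : ℂ}
    (hw : ‖w‖ < ρ) :
    (∮ z in C(0, ρ), (1 - z)⁻¹ * g (w / z)) = 2 * π * I * (g w - g 0) := by
  set G : ℂ → ℂ := fun ζ => g (w * ζ)
  have hG : DifferentiableOn ℂ G (closedBall 0 ρ⁻¹) := by
    refine hg.comp (differentiableOn_id.const_mul w) fun ζ hζ => ?_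
    rw [mem_closedBall_zero_iff] at hζ
    rw [mem_ball_zero_iff, norm_mul]
    calc ‖w‖ * ‖ζ‖ ≤ ‖w‖ * ρ⁻¹ := by gcongr
      _ < ρ * ρ⁻¹ := by gcongr
      _ = 1 := mul_inv_cancel₀ hρ0.ne'
  have hone : (1 : ℂ) ∈ ball 0 ρ⁻¹ := by
    simpa using one_lt_inv₀ hρ0 |>.2 hρ1
  have hzero : (0 : ℂ) ∈ ball 0 ρ⁻¹ := mem_ball_self (by positivity)
  have hsphere : ∀ ζ ∈ sphere (0 : ℂ) ρ⁻¹, ∀ a ∈ ball (0 : ℂ) ρ⁻¹, ζ - a ≠ 0 :=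
    fun ζ hζ a ha => sub_ne_zero.2 <| ne_of_apply_ne norm <| by
      rw [mem_sphere_zero_iff_norm.1 hζ]
      exact (mem_ball_zero_iff.1 ha).ne'
  have hpartial : EqOn (fun ζ => (ζ ^ 2)⁻¹ • ((1 - ζ⁻¹)⁻¹ * g (w / ζ⁻¹)))
      (fun ζ => (ζ - 1)⁻¹ • G ζ - (ζ - 0)⁻¹ • G ζ) (sphere 0 ρ⁻¹) := fun ζ hζ => by
    have h0 := hsphere ζ hζ 0 hzero
    have h1 := hsphere ζ hζ 1 hone
    rw [sub_zero] at h0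
    simp only [G, smul_eq_mul, div_inv_eq_mul, sub_zero]
    field_simp
    ring
  have hint : ∀ a ∈ ball (0 : ℂ) ρ⁻¹, CircleIntegrable (fun ζ => (ζ - a)⁻¹ • G ζ) 0 ρ⁻¹ :=
    fun a ha => ContinuousOn.circleIntegrable (by positivity) <|
      ((continuousOn_id.sub continuousOn_const).inv₀ fun ζ hζ => hsphere ζ hζ a ha).smul
      (hG.continuousOn.mono sphere_subset_closedBall)
  rw [circleIntegral_eq_circleIntegral_inv_radius, circleIntegral.integral_congr (by positivity)
    hpartial, circleIntegral.integral_sub (hint 1 hone) (hint 0 hzero),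
    hG.circleIntegral_sub_inv_smul hone, hG.circleIntegral_sub_inv_smul hzero]
  simp only [G, smul_eq_mul, mul_zero, mul_one]
  ring

theorem Lop_eq_sub {f h : ℂ → ℂ} {ρ : ℝ} (hρ0 : 0 < ρ) (hρ1 : ρ < 1)
    (hhf : DifferentiableOn ℂ (h ∘ f) (ball 0 1)) {w : ℂ} (hw : w ∈ ball 0 ρ) :
    Lop f ρ h w = h (f w) - h (f 0) := by
  have hπ : (2 * π * I : ℂ) ≠ 0 := by simp [pi_ne_zero, I_ne_zero]
  have key := circleIntegral_one_sub_inv_mul_comp_div hhf hρ0 hρ1 (mem_ball_zero_iff.1 hw)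
  simp only [Function.comp_apply] at key
  rw [Lop, key, inv_mul_cancel_left₀ hπ]

theorem Lop_eq_Rop_one (f : ℂ → ℂ) (ρ : ℝ) (h : ℂ → ℂ) : Lop f ρ h = Rop f ρ 1 h := by
  ext w
  simp [Lop, Rop]

theorem Rop_apply_zero (f : ℂ → ℂ) {ρ : ℝ} (hρ0 : 0 ≤ ρ) (hρ1 : ρ < 1) (m : ℕ) (h : ℂ → ℂ) :
    Rop f ρ m h 0 = 0 := by
  have hd : DifferentiableOn ℂ (fun z : ℂ => z ^ (m - 1) * (1 - z)⁻¹ * h (f 0))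
      (closedBall 0 ρ) := by
    refine ((differentiableOn_pow _).mul ((differentiableOn_const 1).sub differentiableOn_id
      |>.inv fun z hz => sub_ne_zero.2 <| ne_of_apply_ne norm ?_)).mul_const _
    rw [norm_one]
    exact ((mem_closedBall_zero_iff.1 hz).trans_lt hρ1).ne'
  simp only [Rop, zero_div, mul_zero,
    (hd.mono closure_ball_subset_closedBall).diffContOnCl.circleIntegral_eq_zero hρ0]

theorem norm_circleIntegral_le_of_norm_circleMap_le {E : Type*} [NormedAddCommGroup E]
    [NormedSpace ℂ E] {f : ℂ → E} {c : ℂ} {R : ℝ} (hR : 0 ≤ R) {B : ℝ → ℝ}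
    (hB : IntervalIntegrable B MeasureTheory.volume 0 (2 * π))
    (hfB : ∀ θ, ‖f (circleMap c R θ)‖ ≤ B θ) :
    ‖∮ z in C(c, R), f z‖ ≤ R * ∫ θ in 0..2 * π, B θ := by
  rw [circleIntegral, ← intervalIntegral.integral_const_mul]
  refine intervalIntegral.norm_integral_le_of_norm_le two_pi_pos.le
    (Filter.Eventually.of_forall fun θ _ => ?_) (hB.const_mul R)
  rw [norm_smul, deriv_circleMap, norm_mul, norm_circleMap_zero, norm_I, mul_one, abs_of_nonneg hR]
  exact mul_le_mul_of_nonneg_left (hfB θ) hR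

theorem norm_Lop_sub_le {f h : ℂ → ℂ} {ρ : ℝ} (hρ0 : 0 < ρ) (hρ1 : ρ < 1)
    (hhf : DifferentiableOn ℂ (h ∘ f) (ball 0 1)) {O : ℝ}
    (hosc : ∀ u ∈ ball (0 : ℂ) 1, ∀ v ∈ ball (0 : ℂ) 1, ‖h (f u) - h (f v)‖ ≤ O)
    {u v : ℂ} (hu : u ∈ ball 0 ρ) (hv : v ∈ ball 0 ρ) :
    ‖Lop f ρ h u - Lop f ρ h v‖ ≤ O := by
  have hsub : ball (0 : ℂ) ρ ⊆ ball 0 1 := ball_subset_ball hρ1.le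
  rw [Lop_eq_sub hρ0 hρ1 hhf hu, Lop_eq_sub hρ0 hρ1 hhf hv, sub_sub_sub_cancel_right]
  exact hosc u (hsub hu) v (hsub hv)

theorem norm_Rop_sub_le {f h : ℂ → ℂ} {ρ : ℝ} (hρ0 : 0 < ρ) (hρ1 : ρ < 1) (m : ℕ)
    (hhf : ContinuousOn (h ∘ f) (ball 0 1)) {O : ℝ}
    (hosc : ∀ u ∈ ball (0 : ℂ) 1, ∀ v ∈ ball (0 : ℂ) 1, ‖h (f u) - h (f v)‖ ≤ O)
    {u v : ℂ} (hu : u ∈ ball 0 ρ) (hv : v ∈ ball 0 ρ) :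
    ‖Rop f ρ m h u - Rop f ρ m h v‖ ≤
      ρ ^ (m - 1) * ((1 / (2 * π)) * ∫ θ in 0..2 * π, ρ / ‖1 - circleMap 0 ρ θ‖) * O := by
  have hdiv : ∀ w ∈ ball (0 : ℂ) ρ, ∀ z ∈ sphere (0 : ℂ) ρ, w / z ∈ ball (0 : ℂ) 1 := by
    intro w hw z hz
    rw [mem_ball_zero_iff, norm_div, mem_sphere_zero_iff_norm.1 hz, div_lt_one hρ0]
    exact mem_ball_zero_iff.1 hw
  have hne : ∀ z ∈ sphere (0 : ℂ) ρ, 1 - z ≠ 0 := fun z hz =>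
    sub_ne_zero.2 <| ne_of_apply_ne norm <| by
      rw [norm_one, mem_sphere_zero_iff_norm.1 hz]
      exact hρ1.ne'
  set F : ℂ → ℂ → ℂ := fun w z => z ^ (m - 1) * (1 - z)⁻¹ * h (f (w / z))
  have hint : ∀ w ∈ ball (0 : ℂ) ρ, CircleIntegrable (F w) 0 ρ := fun w hw =>
    ContinuousOn.circleIntegrable hρ0.le <|
      ((continuousOn_pow _).mul ((continuousOn_const.sub continuousOn_id).inv₀ hne)).mul <|
      hhf.comp (continuousOn_const.div continuousOn_id fun z hz => ne_of_mem_sphere hz hρ0.ne')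
        (hdiv w hw)
  have hbound : ∀ θ, ‖F u (circleMap 0 ρ θ) - F v (circleMap 0 ρ θ)‖ ≤
      ρ ^ (m - 1) * O * ‖1 - circleMap 0 ρ θ‖⁻¹ := by
    intro θ
    have hz := circleMap_mem_sphere 0 hρ0.le θ
    simp only [F, ← mul_sub, norm_mul, norm_pow, norm_inv, mem_sphere_zero_iff_norm.1 hz]
    calc _ ≤ ρ ^ (m - 1) * ‖1 - circleMap 0 ρ θ‖⁻¹ * O := by
          gcongr
          exact hosc _ (hdiv u hu _ hz) _ (hdiv v hv _ hz)
      _ = _ := by ring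
  have hcont : Continuous fun θ => ‖1 - circleMap 0 ρ θ‖⁻¹ :=
    (continuous_const.sub (continuous_circleMap 0 ρ)).norm.inv₀ fun θ =>
      norm_ne_zero_iff.2 (hne _ (circleMap_mem_sphere 0 hρ0.le θ))
  have hπ : ‖(2 * π * I : ℂ)⁻¹‖ = (2 * π)⁻¹ := by simp [abs_of_pos pi_pos]
  calc ‖Rop f ρ m h u - Rop f ρ m h v‖ = (2 * π)⁻¹ * ‖∮ z in C(0, ρ), F u z - F v z‖ := by
        rw [Rop, Rop, ← mul_sub, ← circleIntegral.integral_sub (hint u hu) (hint v hv),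
          norm_mul, hπ]
    _ ≤ (2 * π)⁻¹ * (ρ * ∫ θ in 0..2 * π, ρ ^ (m - 1) * O * ‖1 - circleMap 0 ρ θ‖⁻¹) := by
        gcongr
        exact norm_circleIntegral_le_of_norm_circleMap_le hρ0.le
          ((hcont.intervalIntegrable _ _).const_mul _) hbound
    _ = _ := by
        simp only [intervalIntegral.integral_const_mul, div_eq_mul_inv]
        ring

theorem integral_operator_oscillation_bounds_general
    (a b c d : ℂ)
    (ρ : ℝ) (hρ0 : 0 < ρ) (hρ1 : ρ < 1)
    (hpole : ∀ z : ℂ, ‖z‖ < 1 → c * z + d ≠ 0)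
    (hmap : ∀ z : ℂ, ‖z‖ < 1 → ‖(a * z + b) / (c * z + d)‖ < ρ)
    (h : ℂ → ℂ) (hh : DifferentiableOn ℂ h (ball (0 : ℂ) ρ))
    (O : ℝ) (hosc : ∀ u ∈ ball (0 : ℂ) ρ, ∀ v ∈ ball (0 : ℂ) ρ, ‖h u - h v‖ ≤ O)
    (m : ℕ) :
    (∀ u ∈ ball (0 : ℂ) ρ, ∀ v ∈ ball (0 : ℂ) ρ,
      ‖Lop (fun z => (a * z + b) / (c * z + d)) ρ h u -
       Lop (fun z => (a * z + b) / (c * z + d)) ρ h v‖ ≤ O) ∧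
    (∀ u ∈ ball (0 : ℂ) ρ, ∀ v ∈ ball (0 : ℂ) ρ,
      ‖Rop (fun z => (a * z + b) / (c * z + d)) ρ m h u -
       Rop (fun z => (a * z + b) / (c * z + d)) ρ m h v‖ ≤
      ρ ^ (m - 1) *
        ((1 / (2 * Real.pi)) *
          ∫ θ in (0 : ℝ)..(2 * Real.pi), ρ / ‖(1 : ℂ) - (ρ : ℂ) * Complex.exp (θ * I)‖) *
        O) ∧
    (Lop (fun z => (a * z + b) / (c * z + d)) ρ h 0 = 0 ∧
     Rop (fun z => (a * z + b) / (c * z + d)) ρ m h 0 = 0) := by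
  set f : ℂ → ℂ := fun z => (a * z + b) / (c * z + d)
  have hf : MapsTo f (ball 0 1) (ball 0 ρ) := fun z hz =>
    mem_ball_zero_iff.2 (hmap z (mem_ball_zero_iff.1 hz))
  have hhf : DifferentiableOn ℂ (h ∘ f) (ball 0 1) :=
    hh.comp (DifferentiableOn.div (by fun_prop) (by fun_prop)
      fun z hz => hpole z (mem_ball_zero_iff.1 hz)) hf
  have hosc_comp : ∀ u ∈ ball (0 : ℂ) 1, ∀ v ∈ ball (0 : ℂ) 1, ‖h (f u) - h (f v)‖ ≤ O :=
    fun u hu v hv => hosc _ (hf hu) _ (hf hv)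
  refine ⟨fun u hu v hv => norm_Lop_sub_le hρ0 hρ1 hhf hosc_comp hu hv, fun u hu v hv => ?_,
    ?_, Rop_apply_zero f hρ0.le hρ1 m h⟩
  · simpa only [circleMap_zero] using norm_Rop_sub_le hρ0 hρ1 m hhf.continuousOn hosc_comp hu hv
  · rw [Lop_eq_Rop_one]
    exact Rop_apply_zero f hρ0.le hρ1 1 h

/-- oscillation bounds for the integral operators `L` and `R_m` attached
to a Möbius transformation `f` with `f(𝔻₁) ⊆ 𝔻_ρ`, acting on a bounded-oscillation
holomorphic function `h` on `𝔻_ρ`, where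
`K(ρ) = (1/(2π)) ∫₀^{2π} ρ/|1−ρe^{iθ}| dθ`:
(a) `‖Lh‖_osc ≤ ‖h‖_osc`; (b) `‖R_m h‖_osc ≤ ρ^{m-1} K(ρ) ‖h‖_osc`;
(c) `Lh(0) = R_m h(0) = 0`. -/
theorem integral_operator_oscillation_bounds
    (a b c d : ℂ) (hdet : a * d - b * c ≠ 0)
    (ρ : ℝ) (hρ0 : 0 < ρ) (hρ1 : ρ < 1)
    (hpole : ∀ z : ℂ, ‖z‖ < 1 → c * z + d ≠ 0)
    (hmap : ∀ z : ℂ, ‖z‖ < 1 → ‖(a * z + b) / (c * z + d)‖ < ρ)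
    (h : ℂ → ℂ) (hh : DifferentiableOn ℂ h (ball (0 : ℂ) ρ))
    (O : ℝ) (hosc : ∀ u ∈ ball (0 : ℂ) ρ, ∀ v ∈ ball (0 : ℂ) ρ, ‖h u - h v‖ ≤ O)
    (m : ℕ) (hm : 1 ≤ m) :
    (∀ u ∈ ball (0 : ℂ) ρ, ∀ v ∈ ball (0 : ℂ) ρ,
      ‖Lop (fun z => (a * z + b) / (c * z + d)) ρ h u -
       Lop (fun z => (a * z + b) / (c * z + d)) ρ h v‖ ≤ O) ∧
    (∀ u ∈ ball (0 : ℂ) ρ, ∀ v ∈ ball (0 : ℂ) ρ,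
      ‖Rop (fun z => (a * z + b) / (c * z + d)) ρ m h u -
       Rop (fun z => (a * z + b) / (c * z + d)) ρ m h v‖ ≤
      ρ ^ (m - 1) *
        ((1 / (2 * Real.pi)) *
          ∫ θ in (0 : ℝ)..(2 * Real.pi), ρ / ‖(1 : ℂ) - (ρ : ℂ) * Complex.exp (θ * I)‖) *
        O) ∧
    (Lop (fun z => (a * z + b) / (c * z + d)) ρ h 0 = 0 ∧
     Rop (fun z => (a * z + b) / (c * z + d)) ρ m h 0 = 0) :=
  integral_operator_oscillation_bounds_general a b c d ρ hρ0 hρ1 hpole hmap h hh O hosc m
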